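/- Let G = 2.A_n be the double cover of the alternating group A_n. If n ∈ {4, 5}, then every Sylow 2-subgroup of G is isomorphic to the quaternion group of order 8; if n ∈ {6, 7}, then every Sylow 2-subgroup of G is isomorphic to the generalized quaternion group of order 16. -/

import Mathlib

/-! Double covers `2^α.S_n` of the symmetric groups, via the presentation with
generators `z, t_1, …, t_{n-1}` and relations `z² = 1`, `t_j² = z^α`,
`(t_j t_{j+1})³ = z^α`, `[z, t_j] = 1`, and `t_j t_k = z t_k t_j` for `|j - k| > 1`.
Here `α = 0` gives `2^+.S_n` and `α = 1` gives `2^-.S_n`. -/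

namespace DoubleCover

/-- Generators: `Sum.inl ()` is `z`; `Sum.inr j` is `t_{j+1}` for `j : Fin (n - 1)`. -/
abbrev Gen (n : ℕ) := Unit ⊕ Fin (n - 1)

/-- The word `z` in the free group on the generators. -/
def zw (n : ℕ) : FreeGroup (Gen n) := FreeGroup.of (Sum.inl ())

/-- The word `t_{j+1}` in the free group on the generators. -/
def tw (n : ℕ) (j : Fin (n - 1)) : FreeGroup (Gen n) := FreeGroup.of (Sum.inr j)

/-- The relations of the presentation of `2^α.S_n`. -/
def rels (n α : ℕ) : Set (FreeGroup (Gen n)) :=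
  {r | r = zw n ^ 2
    ∨ (∃ j, r = tw n j ^ 2 * (zw n ^ α)⁻¹)
    ∨ (∃ j k : Fin (n - 1), (j : ℕ) + 1 = (k : ℕ) ∧
        r = (tw n j * tw n k) ^ 3 * (zw n ^ α)⁻¹)
    ∨ (∃ j, r = zw n * tw n j * (zw n)⁻¹ * (tw n j)⁻¹)
    ∨ (∃ j k : Fin (n - 1), 1 < Nat.dist (j : ℕ) (k : ℕ) ∧
        r = tw n j * tw n k * (zw n * tw n k * tw n j)⁻¹)}

/-- The double cover `2^α.S_n` of the symmetric group `S_n`. -/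
abbrev Cover (n α : ℕ) := PresentedGroup (rels n α)

/-- The central element `z` of `2^α.S_n`. -/
def z (n α : ℕ) : Cover n α := PresentedGroup.of (Sum.inl ())

/-- The generator `t_{j+1}` of `2^α.S_n`, lifting the transposition `(j+1, j+2)`. -/
def t (n α : ℕ) (j : Fin (n - 1)) : Cover n α := PresentedGroup.of (Sum.inr j)

end DoubleCover

/-- A subgroup is an elementary abelian 2-subgroup iff every element squares to `1`
(this forces it to be abelian). -/
def IsElemAbelianTwo {G : Type*} [Group G] (E : Subgroup G) : Prop :=
  ∀ x ∈ E, x ^ 2 = 1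

/-!
The kernel `⟨z⟩` of `π` is central of order 2, so the square of `x` depends only on `π x`, and
lifts of conjugate permutations have conjugate squares. As `(t₁ t₃)² = z`, every lift of a
double transposition squares to `z`. Choose `A, B` in `G = π⁻¹(A_n)` with
`A ^ m = B² = (BA)² = z`, where `m = 2` for `n = 4, 5` and `m = 4` for `n = 6, 7`. Then `A` has
order `2m` and `BAB⁻¹ = A⁻¹`, so `a i ↦ A ^ i`, `xa i ↦ B A ^ i` embeds `QuaternionGroup m`
into `G`. Its image, of order `4m`, is a Sylow 2-subgroup because `|G| = n!` and `n! / 4m` is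
odd.
-/

section ZModPow

variable {G : Type*} [Group G] {n : ℕ}

theorem pow_zmod_val_add [NeZero n] {A : G} (hA : A ^ n = 1) (i j : ZMod n) :
    A ^ (i + j).val = A ^ i.val * A ^ j.val := by
  rw [ZMod.val_add, ← pow_eq_pow_mod _ hA, pow_add]

theorem pow_zmod_val_neg [NeZero n] {A : G} (hA : A ^ n = 1) (i : ZMod n) :
    A ^ (-i).val = (A ^ i.val)⁻¹ := by
  rw [eq_inv_iff_mul_eq_one, ← pow_zmod_val_add hA, neg_add_cancel, ZMod.val_zero, pow_zero]

theorem pow_zmod_val_natCast {A : G} (hA : A ^ n = 1) (k : ℕ) :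
    A ^ (k : ZMod n).val = A ^ k := by
  rw [ZMod.val_natCast, ← pow_eq_pow_mod _ hA]

end ZModPow

namespace QuaternionGroup

variable {G : Type*} [Group G] {n : ℕ} [NeZero n]

def lift (A B : G) (hA : A ^ (2 * n) = 1) (hB : B ^ 2 = A ^ n) (hBA : B * A * B⁻¹ = A⁻¹) :
    QuaternionGroup n →* G where
  toFun
    | a i => A ^ i.val
    | xa i => B * A ^ i.val
  map_one' := by
    change A ^ (0 : ZMod (2 * n)).val = 1
    rw [ZMod.val_zero, pow_zero]
  map_mul' := by
    have hconj (i : ZMod (2 * n)) : B * A ^ (-i).val = A ^ i.val * B := by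
      rw [pow_zmod_val_neg hA, ← inv_pow, ← mul_inv_eq_iff_eq_mul, ← conj_pow, ← conj_inv,
        hBA, inv_inv]
    rintro (i | i) (j | j)
    · exact pow_zmod_val_add hA i j
    · change B * A ^ (j - i).val = A ^ i.val * (B * A ^ j.val)
      rw [sub_eq_neg_add, pow_zmod_val_add hA, ← mul_assoc, hconj, mul_assoc]
    · change B * A ^ (i + j).val = B * A ^ i.val * A ^ j.val
      rw [pow_zmod_val_add hA, mul_assoc]
    · change A ^ ((n : ZMod (2 * n)) + j - i).val = B * A ^ i.val * (B * A ^ j.val)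
      rw [add_sub_assoc, sub_eq_neg_add, pow_zmod_val_add hA, pow_zmod_val_add hA,
        pow_zmod_val_natCast hA, ← hB, sq, mul_assoc B (A ^ i.val), ← mul_assoc (A ^ i.val),
        ← hconj]
      simp only [mul_assoc]

theorem lift_injective {A B : G} (hA : A ^ (2 * n) = 1) (hB : B ^ 2 = A ^ n)
    (hBA : B * A * B⁻¹ = A⁻¹) (hAord : orderOf A = 2 * n) :
    Function.Injective (lift A B hA hB hBA) := by
  rw [injective_iff_map_eq_one]
  rintro (i | i) hi
  · change A ^ i.val = 1 at hi
    have hdvd := orderOf_dvd_of_pow_eq_one hi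
    rw [hAord] at hdvd
    rw [(ZMod.val_eq_zero i).mp (Nat.eq_zero_of_dvd_of_lt hdvd (ZMod.val_lt i)), a_zero]
  · change B * A ^ i.val = 1 at hi
    have hBinv : B = (A ^ i.val)⁻¹ := eq_inv_of_mul_eq_one_left hi
    have hA2 : A ^ 2 = 1 := by
      have hcomm : B * A * B⁻¹ = A := by
        rw [hBinv, ((Commute.refl A).pow_left i.val).inv_left.eq, mul_inv_cancel_right]
      rw [sq, ← inv_eq_iff_mul_eq_one, ← hBA, hcomm]
    have hAn : A ^ n = 1 := by
      rw [← hB, hBinv, inv_pow, ← pow_mul, mul_comm, pow_mul, hA2, one_pow, inv_one]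
    have hn : n < orderOf A := by rw [hAord]; have := NeZero.ne n; omega
    exact absurd hAn (pow_ne_one_of_lt_orderOf (NeZero.ne n) hn)

theorem _root_.Sylow.nonempty_mulEquiv_quaternionGroup {G : Type*} [Group G] [Finite G]
    {k : ℕ} {A B : G} (hA : orderOf A = 2 * 2 ^ k) (hB : B ^ 2 = A ^ 2 ^ k)
    (hBA : B * A * B⁻¹ = A⁻¹) (hodd : Odd (Nat.card G / 2 ^ (k + 2))) (P : Sylow 2 G) :
    Nonempty (P ≃* QuaternionGroup (2 ^ k)) := by
  let f := lift A B (hA ▸ pow_orderOf_eq_one A) hB hBA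
  have hinj : Function.Injective f := lift_injective _ hB hBA hA
  have hcard : Nat.card f.range = 2 ^ (k + 2) := by
    rw [← Nat.card_congr (MonoidHom.ofInjective hinj).toEquiv, Nat.card_eq_fintype_card, card]
    ring
  have hindex : f.range.index = Nat.card G / 2 ^ (k + 2) := by
    rw [← f.range.index_mul_card, hcard, Nat.mul_div_cancel _ (by positivity)]
  exact ⟨(P.equiv (IsPGroup.toSylow (IsPGroup.of_card hcard)
    (hindex ▸ hodd.not_two_dvd_nat))).trans (MonoidHom.ofInjective hinj).symm⟩

end QuaternionGroup

theorem conj_eq_inv_of_mul_sq_eq_sq {G : Type*} [Group G] {A B : G} (h : (B * A) ^ 2 = B ^ 2) :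
    B * A * B⁻¹ = A⁻¹ := by
  rw [sq, sq, mul_assoc] at h
  rw [mul_inv_eq_iff_eq_mul, eq_inv_mul_iff_mul_eq, mul_left_cancel h]

namespace DoubleCover

open Equiv Subgroup Nat

variable {n α : ℕ}

theorem z_sq : z n α ^ 2 = 1 := by
  rw [z, PresentedGroup.of, ← map_pow]
  exact PresentedGroup.one_of_mem (Or.inl rfl)

theorem t_sq (j : Fin (n - 1)) : t n α j ^ 2 = z n α ^ α := by
  have h := PresentedGroup.mk_eq_mk_of_mul_inv_mem (rels := rels n α)
    (Or.inr (Or.inl ⟨j, rfl⟩))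
  rwa [map_pow, map_pow] at h

theorem t_mul_t_of_one_lt_dist {j k : Fin (n - 1)} (h : 1 < Nat.dist j k) :
    t n α j * t n α k = z n α * t n α k * t n α j := by
  have h := PresentedGroup.mk_eq_mk_of_mul_inv_mem (rels := rels n α)
    (Or.inr (Or.inr (Or.inr (Or.inr ⟨j, k, h, rfl⟩))))
  rwa [map_mul, map_mul, map_mul] at h

theorem commute_z (g : Cover n α) : Commute (z n α) g := by
  suffices g ∈ centralizer {z n α} from (mem_centralizer_singleton_iff.mp this).symm
  refine PresentedGroup.generated_by _ _ ?_ g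
  rintro (⟨⟩ | j)
  · exact mem_centralizer_singleton_iff.mpr rfl
  · have h := PresentedGroup.one_of_mem (rels := rels n α)
      (Or.inr (Or.inr (Or.inr (Or.inl ⟨j, rfl⟩))))
    rw [map_mul, map_mul, map_mul, map_inv, map_inv] at h
    exact mem_centralizer_singleton_iff.mpr (commutatorElement_eq_one_iff_mul_comm.mp h).symm

theorem t_mul_t_sq_of_one_lt_dist {j k : Fin (n - 1)} (h : 1 < Nat.dist j k) :
    (t n α j * t n α k) ^ 2 = z n α := by
  have hkj := t_mul_t_of_one_lt_dist (α := α) (Nat.dist_comm j k ▸ h)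
  calc (t n α j * t n α k) ^ 2 = t n α j * (t n α k * t n α j) * t n α k := by
        rw [sq]; simp only [mul_assoc]
    _ = z n α * (t n α j ^ 2 * t n α k ^ 2) := by
      rw [hkj, mul_assoc (z n α), ← mul_assoc (t n α j) (z n α), ← (commute_z (t n α j)).eq,
        sq, sq]
      simp only [mul_assoc]
    _ = z n α := by rw [t_sq, t_sq, ← pow_add, ← two_mul, pow_mul, z_sq, one_pow, mul_one]

section Projection

variable {π : Cover n α →* Perm (Fin n)}

theorem sq_eq_sq_of_map_eq (hker : π.ker = zpowers (z n α)) {x y : Cover n α} (h : π x = π y) :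
    x ^ 2 = y ^ 2 := by
  obtain ⟨k, hk⟩ : ∃ k : ℤ, z n α ^ k = x * y⁻¹ := by
    rw [← mem_zpowers_iff, ← hker, MonoidHom.mem_ker, map_mul, map_inv, h, mul_inv_cancel]
  rw [← inv_mul_cancel_right x y, ← hk, ((commute_z y).zpow_left k).mul_pow, ← zpow_natCast,
    ← zpow_mul, mul_comm, zpow_mul, zpow_natCast, z_sq, one_zpow, one_mul]

theorem sq_eq_z_of_isConj (hsurj : Function.Surjective π) (hker : π.ker = zpowers (z n α))
    {x y : Cover n α} (hy : y ^ 2 = z n α) (h : IsConj (π x) (π y)) : x ^ 2 = z n α := by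
  obtain ⟨c, hc⟩ := isConj_iff.mp h.symm
  obtain ⟨g, rfl⟩ := hsurj c
  rw [sq_eq_sq_of_map_eq hker (y := g * y * g⁻¹) (by rw [map_mul, map_mul, map_inv, hc]),
    conj_pow, hy, ← (commute_z g).eq, mul_inv_cancel_right]

theorem sq_eq_z_of_isConj_t_mul_t (hsurj : Function.Surjective π)
    (hker : π.ker = zpowers (z n α)) {j k : Fin (n - 1)} (hjk : 1 < Nat.dist j k) (x : Cover n α)
    (h : IsConj (π x) (π (t n α j * t n α k))) : x ^ 2 = z n α :=
  sq_eq_z_of_isConj hsurj hker (t_mul_t_sq_of_one_lt_dist hjk) h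

theorem card_cover (hsurj : Function.Surjective π) (hker : π.ker = zpowers (z n α))
    (hz : orderOf (z n α) = 2) : Nat.card (Cover n α) = 2 * n ! := by
  rw [π.ker.card_eq_card_quotient_mul_card_subgroup,
    Nat.card_congr (QuotientGroup.quotientKerEquivOfSurjective π hsurj).toEquiv, hker,
    Nat.card_zpowers, hz, Nat.card_perm, Nat.card_fin, mul_comm]

theorem card_comap_alternatingGroup (hn : 2 ≤ n) (hsurj : Function.Surjective π)
    (hker : π.ker = zpowers (z n α)) (hz : orderOf (z n α) = 2) :
    Nat.card (comap π (alternatingGroup (Fin n))) = n ! := by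
  have := Fin.nontrivial_iff_two_le.mpr hn
  have h := (comap π (alternatingGroup (Fin n))).index_mul_card
  rw [index_comap_of_surjective _ hsurj, alternatingGroup.index_eq_two,
    card_cover hsurj hker hz] at h
  omega

theorem nonempty_sylow_mulEquiv_quaternionGroup_of_lifts (hn : 2 ≤ n)
    (hsurj : Function.Surjective π) (hker : π.ker = zpowers (z n α))
    (hz : orderOf (z n α) = 2) {k : ℕ} {A B : Cover n α}
    (hA : π A ∈ alternatingGroup (Fin n)) (hB : π B ∈ alternatingGroup (Fin n))
    (hAk : (A ^ 2 ^ k) ^ 2 = z n α) (hB2 : B ^ 2 = z n α) (hBA : (B * A) ^ 2 = z n α)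
    (hodd : Odd (n ! / 2 ^ (k + 3))) (P : Sylow 2 (comap π (alternatingGroup (Fin n)))) :
    Nonempty (P ≃* QuaternionGroup (2 ^ (k + 1))) := by
  have hcard := card_comap_alternatingGroup hn hsurj hker hz
  have : Finite (comap π (alternatingGroup (Fin n))) :=
    Nat.finite_of_card_ne_zero (hcard ▸ factorial_ne_zero n)
  have hA' : A ^ 2 ^ (k + 1) = z n α := by rw [pow_succ, pow_mul, hAk]
  have hAord : orderOf A = 2 * 2 ^ (k + 1) := by
    rw [← pow_succ']
    refine orderOf_eq_prime_pow ?_ ?_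
    · rw [hA']
      rintro h
      rw [h, orderOf_one] at hz
      omega
    · rw [pow_succ, pow_mul, hA', z_sq]
  refine Sylow.nonempty_mulEquiv_quaternionGroup (A := ⟨A, mem_comap.mpr hA⟩)
    (B := ⟨B, mem_comap.mpr hB⟩) ?_ ?_ ?_ ?_ P
  · rwa [Subgroup.orderOf_mk]
  · ext
    simp [hB2, hA']
  · exact conj_eq_inv_of_mul_sq_eq_sq (Subtype.ext (by simpa using hBA.trans hB2.symm))
  · rw [hcard]
    exact hodd

theorem nonempty_sylow_mulEquiv_quaternionGroup_two (h45 : n = 4 ∨ n = 5)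
    (hπt : ∀ j : Fin (n - 1), π (t n α j) =
      swap (Fin.castLE (by omega) j) (Fin.castLE (by omega) j.succ))
    (hsurj : Function.Surjective π) (hker : π.ker = zpowers (z n α))
    (hz : orderOf (z n α) = 2) (P : Sylow 2 (comap π (alternatingGroup (Fin n)))) :
    Nonempty (P ≃* QuaternionGroup 2) := by
  obtain rfl | rfl := h45 <;>
  have hdt := sq_eq_z_of_isConj_t_mul_t (π := π) (j := 0) (k := 2) hsurj hker (by decide) <;>
  -- `A ↦ (0 1)(2 3)` and `B ↦ (0 2)(1 3)`
  refine nonempty_sylow_mulEquiv_quaternionGroup_of_lifts (k := 0) (A := t _ α 0 * t _ α 2)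
    (B := t _ α 1 * t _ α 0 * t _ α 2 * t _ α 1) (by omega) hsurj hker hz ?_ ?_
    (hdt _ ?_) (hdt _ ?_) (hdt _ ?_) (by decide) P <;>
  simp only [Perm.mem_alternatingGroup, Perm.isConj_iff_cycleType_eq, pow_zero, pow_one,
    map_mul, hπt] <;>
  decide

theorem nonempty_sylow_mulEquiv_quaternionGroup_four (h67 : n = 6 ∨ n = 7)
    (hπt : ∀ j : Fin (n - 1), π (t n α j) =
      swap (Fin.castLE (by omega) j) (Fin.castLE (by omega) j.succ))
    (hsurj : Function.Surjective π) (hker : π.ker = zpowers (z n α))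
    (hz : orderOf (z n α) = 2) (P : Sylow 2 (comap π (alternatingGroup (Fin n)))) :
    Nonempty (P ≃* QuaternionGroup 4) := by
  obtain rfl | rfl := h67 <;>
  have hdt := sq_eq_z_of_isConj_t_mul_t (π := π) (j := 0) (k := 2) hsurj hker (by decide) <;>
  -- `A ↦ (0 3 2 1)(4 5)` and `B ↦ (0 1)(2 3)`
  refine nonempty_sylow_mulEquiv_quaternionGroup_of_lifts (k := 1)
    (A := t _ α 2 * t _ α 1 * t _ α 0 * t _ α 4) (B := t _ α 0 * t _ α 2) (by omega)
    hsurj hker hz ?_ ?_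
    (hdt _ ?_) (hdt _ ?_) (hdt _ ?_) (by decide) P <;>
  simp only [Perm.mem_alternatingGroup, Perm.isConj_iff_cycleType_eq, pow_one, map_pow,
    map_mul, hπt] <;>
  decide

end Projection

end DoubleCover

/-- Let `G = 2.A_n = π⁻¹(A_n)`. If `n ∈ {4, 5}` then every Sylow
2-subgroup of `G` is isomorphic to the quaternion group of order 8, and if `n ∈ {6, 7}`
then every Sylow 2-subgroup of `G` is isomorphic to the generalized quaternion group of
order 16. -/
theorem sylow_two_of_two_An_quaternion
    (n : ℕ) (hn : 4 ≤ n) (α : ℕ)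
    (π : DoubleCover.Cover n α →* Equiv.Perm (Fin n))
    (hπt : ∀ j : Fin (n - 1), π (DoubleCover.t n α j) =
      Equiv.swap (Fin.castLE (by omega) j) (Fin.castLE (by omega) j.succ))
    (hπsurj : Function.Surjective π)
    (hπker : π.ker = Subgroup.zpowers (DoubleCover.z n α))
    (hz : orderOf (DoubleCover.z n α) = 2) :
    ((n = 4 ∨ n = 5) →
      ∀ P : Sylow 2 ↥(Subgroup.comap π (alternatingGroup (Fin n))),
        Nonempty (↥(P : Subgroup ↥(Subgroup.comap π (alternatingGroup (Fin n)))) ≃*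
          QuaternionGroup 2)) ∧
    ((n = 6 ∨ n = 7) →
      ∀ P : Sylow 2 ↥(Subgroup.comap π (alternatingGroup (Fin n))),
        Nonempty (↥(P : Subgroup ↥(Subgroup.comap π (alternatingGroup (Fin n)))) ≃*
          QuaternionGroup 4)) :=
  ⟨fun h45 =>
    DoubleCover.nonempty_sylow_mulEquiv_quaternionGroup_two h45 hπt hπsurj hπker hz,
   fun h67 =>
    DoubleCover.nonempty_sylow_mulEquiv_quaternionGroup_four h67 hπt hπsurj hπker hz⟩
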